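/- Let K be an algebraically closed field of characteristic 0, let n ≥ 2 and d ≥ 4, and set r = ⌈(d+2)/2⌉ + 1. If S is a set of r distinct points of ℙ^n such that no r − 1 points of S are collinear, then the double points 2S impose independent conditions on degree-d forms: the subspace of degree-d forms in x_0,…,x_n whose first-order partial derivatives all vanish at every point of S has dimension exactly binom(n+d, n) − r(n+1). (Equivalently, ν_d(S) ∉ Ter_r(V_n^d).) -/

import Mathlib

open MvPolynomial

/-- Homogeneous forms of degree `d` in `N` variables all of whose first-order partial
derivatives vanish at every point of the family `p`. -/
noncomputable def dblVanish (K : Type) [Field K] (N d : ℕ) {ι : Type} (p : ι → (Fin N → K)) :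
    Submodule K (MvPolynomial (Fin N) K) :=
  homogeneousSubmodule (Fin N) K d ⊓
    ⨅ (a : ι) (i : Fin N),
      LinearMap.ker ((aeval (p a)).toLinearMap ∘ₗ (pderiv i).toLinearMap)

/-!
The map sending a degree-`d` form to its gradients at the points `S b` is onto
`K^{r(n+1)}`, so its kernel has the expected dimension. To realise the gradient `v` at `S a`
and `0` at the other points, take a product `A` of `d - 1` linear forms, none vanishing at `S a`,
such that every other point lies on two of their hyperplanes: `A` is then singular at the other
points, and by Euler's identity `A ℓ` has gradient `v` at `S a` for a suitable linear form `ℓ`.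
To find the hyperplanes, colour each other point by the line joining it to `S a`. A colouring in
which no colour occupies more than half of the points admits a permutation `τ` changing every
colour (Hall's theorem), and then a hyperplane through `S b` and `S (τ b)` can avoid `S a`; each
point lies on two of these. Non-collinearity leaves at most `r - 3` other points on a line through
`S a`, so after giving a few points of the fullest line a doubled hyperplane of their own, the
colouring is balanced and `d - 1` hyperplanes suffice.
-/

open Module Submodule Finset

section LinearForm

variable {K σ : Type*} [Field K] [Fintype σ]

noncomputable def linearForm (w : σ → K) : MvPolynomial σ K := ∑ i, C (w i) * X i

@[simp]
lemma aeval_linearForm (w x : σ → K) : aeval x (linearForm w) = w ⬝ᵥ x := by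
  simp [linearForm, dotProduct]

@[simp]
lemma pderiv_linearForm [DecidableEq σ] (w : σ → K) (j : σ) :
    pderiv j (linearForm w) = C (w j) := by
  simp [linearForm, pderiv_X, Pi.single_apply]

lemma isHomogeneous_linearForm (w : σ → K) : (linearForm w).IsHomogeneous 1 :=
  IsHomogeneous.sum _ _ _ fun _ _ => isHomogeneous_C_mul_X _ _

lemma isHomogeneous_prod_linearForm (L : Multiset (σ → K)) :
    (L.map linearForm).prod.IsHomogeneous (Multiset.card L) := by
  induction L using Multiset.induction_on with
  | empty => simpa using isHomogeneous_one σ K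
  | cons w L ih =>
    simpa [add_comm] using (isHomogeneous_linearForm w).mul ih

end LinearForm

section Gradient

variable {K σ : Type*} [Field K] [Fintype σ]

lemma sum_mul_aeval_pderiv {φ : MvPolynomial σ K} {e : ℕ} (hφ : φ.IsHomogeneous e) (x : σ → K) :
    ∑ i, x i * aeval x (pderiv i φ) = e * aeval x φ := by
  simpa using congrArg (aeval x) hφ.sum_X_mul_pderiv

/-- By Euler's identity `ℓ ↦ ∇(A ℓ)(x)` is `α • id` plus a rank-one map, invertible since
`deg A + 1 ≠ 0` in characteristic zero; the witness solves this linear system explicitly. -/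
lemma exists_linearForm_pderiv_mul_eq [DecidableEq σ] [CharZero K] {A : MvPolynomial σ K} {e : ℕ}
    (hA : A.IsHomogeneous e) {x : σ → K} (hAx : aeval x A ≠ 0) (v : σ → K) :
    ∃ w : σ → K, ∀ j, aeval x (pderiv j (A * linearForm w)) = v j := by
  set α := aeval x A
  set g : σ → K := fun j => aeval x (pderiv j A)
  have heuler : x ⬝ᵥ g = e * α := sum_mul_aeval_pderiv hA x
  set t := (v ⬝ᵥ x) / ((e + 1) * α)
  have hden : ((e : K) + 1) * α ≠ 0 := mul_ne_zero (Nat.cast_add_one_ne_zero e) hAx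
  refine ⟨α⁻¹ • (v - t • g), fun j => ?_⟩
  have hwx : (α⁻¹ • (v - t • g)) ⬝ᵥ x = t := by
    rw [smul_dotProduct, sub_dotProduct, smul_dotProduct, dotProduct_comm g, heuler, smul_eq_mul,
      smul_eq_mul]
    simp only [t]
    field_simp
    ring
  simp only [pderiv_mul, map_add, map_mul, pderiv_linearForm, aeval_C, aeval_linearForm, hwx,
    Algebra.algebraMap_self_apply]
  change g j * t + α * (α⁻¹ * (v j - t * g j)) = v j
  field_simp
  ring

end Gradient

lemma Multiset.exists_eq_cons_cons_of_two_le_card {α : Type*} {s : Multiset α}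
    (hs : 2 ≤ Multiset.card s) : ∃ a b t, s = a ::ₘ b ::ₘ t := by
  obtain ⟨a, ha⟩ := Multiset.card_pos_iff_exists_mem.1 (show 0 < Multiset.card s by omega)
  obtain ⟨s', rfl⟩ := Multiset.exists_cons_of_mem ha
  obtain ⟨b, hb⟩ := Multiset.card_pos_iff_exists_mem.1
    (show 0 < Multiset.card s' by rw [Multiset.card_cons] at hs; omega)
  obtain ⟨t, rfl⟩ := Multiset.exists_cons_of_mem hb
  exact ⟨a, b, t, rfl⟩

section Singular

variable {K σ : Type*} [Field K]

lemma aeval_pderiv_mul_eq_zero {f g : MvPolynomial σ K} {x : σ → K} (hf : aeval x f = 0)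
    (hg : aeval x g = 0) (j : σ) : aeval x (pderiv j (f * g)) = 0 := by
  rw [pderiv_mul, map_add, map_mul, map_mul, hf, hg, mul_zero, zero_mul, add_zero]

lemma aeval_pderiv_mul_eq_zero_of_singular {f : MvPolynomial σ K} {x : σ → K}
    (hf : aeval x f = 0) {j : σ} (hfj : aeval x (pderiv j f) = 0) (g : MvPolynomial σ K) :
    aeval x (pderiv j (f * g)) = 0 := by
  rw [pderiv_mul, map_add, map_mul, map_mul, hf, hfj, zero_mul, zero_mul, add_zero]

open scoped Classical in
lemma singular_prod_of_two_le_card_filter {s : Multiset (MvPolynomial σ K)} {x : σ → K}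
    (hs : 2 ≤ Multiset.card (s.filter fun f => aeval x f = 0)) :
    aeval x s.prod = 0 ∧ ∀ j, aeval x (pderiv j s.prod) = 0 := by
  obtain ⟨f, g, t, hfgt⟩ := Multiset.exists_eq_cons_cons_of_two_le_card hs
  have hvanish : ∀ h ∈ f ::ₘ g ::ₘ t, aeval x h = 0 := by
    rw [← hfgt]
    exact fun h hh => (Multiset.mem_filter.1 hh).2
  have hf := hvanish f (Multiset.mem_cons_self f _)
  have hg := hvanish g (Multiset.mem_cons_of_mem (Multiset.mem_cons_self g t))
  set r := (s.filter fun f => aeval x f ≠ 0).prod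
  have hprod : s.prod = f * (g * (t.prod * r)) := by
    rw [← Multiset.prod_filter_mul_prod_filter_not (fun f => aeval x f = 0), hfgt]
    simp only [Multiset.prod_cons, r, mul_assoc]
  have hgx : aeval x (g * (t.prod * r)) = 0 := by rw [map_mul, hg, zero_mul]
  rw [hprod]
  exact ⟨by rw [map_mul, hf, zero_mul], aeval_pderiv_mul_eq_zero hf hgx⟩

end Singular

section DoubleCover

open scoped Classical

variable {K σ ι : Type*} [Field K] [Fintype σ]

def DoubleCovers (p : ι → σ → K) (a : ι) (L : Multiset (σ → K)) : Prop :=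
  (∀ ℓ ∈ L, ℓ ⬝ᵥ p a ≠ 0) ∧ ∀ b ≠ a, 2 ≤ Multiset.card (L.filter fun ℓ => ℓ ⬝ᵥ p b = 0)

variable {p : ι → σ → K} {a : ι} {L : Multiset (σ → K)}

lemma DoubleCovers.add_replicate (h : DoubleCovers p a L) {u : σ → K} (hu : u ⬝ᵥ p a ≠ 0)
    (k : ℕ) : DoubleCovers p a (L + Multiset.replicate k u) := by
  refine ⟨fun ℓ hℓ => ?_, fun b hb => ?_⟩
  · rcases Multiset.mem_add.1 hℓ with hℓ | hℓ
    · exact h.1 ℓ hℓ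
    · rwa [Multiset.eq_of_mem_replicate hℓ]
  · rw [Multiset.filter_add, Multiset.card_add]
    exact (h.2 b hb).trans le_self_add

lemma card_filter_map_linearForm (L : Multiset (σ → K)) (x : σ → K) :
    Multiset.card ((L.map linearForm).filter fun f => aeval x f = 0) =
      Multiset.card (L.filter fun ℓ => ℓ ⬝ᵥ x = 0) := by
  simp only [Multiset.filter_map, Multiset.card_map, Function.comp_def, aeval_linearForm]

lemma DoubleCovers.exists_isHomogeneous_pderiv_eq [DecidableEq ι] [CharZero K]
    (h : DoubleCovers p a L) (v : σ → K) :
    ∃ f : MvPolynomial σ K, f.IsHomogeneous (Multiset.card L + 1) ∧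
      ∀ b j, aeval (p b) (pderiv j f) = if b = a then v j else 0 := by
  set A := (L.map linearForm).prod
  have hAa : aeval (p a) A ≠ 0 := by
    rw [map_multiset_prod, Multiset.map_map]
    exact Multiset.prod_ne_zero fun h0 => by
      obtain ⟨ℓ, hℓ, hℓ0⟩ := Multiset.mem_map.1 h0
      exact h.1 ℓ hℓ (by rwa [Function.comp_apply, aeval_linearForm] at hℓ0)
  have hAb : ∀ b ≠ a, aeval (p b) A = 0 ∧ ∀ j, aeval (p b) (pderiv j A) = 0 := fun b hb =>
    singular_prod_of_two_le_card_filter <| (card_filter_map_linearForm L (p b)).symm ▸ h.2 b hb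
  obtain ⟨w, hw⟩ := exists_linearForm_pderiv_mul_eq (isHomogeneous_prod_linearForm L) hAa v
  refine ⟨A * linearForm w, (isHomogeneous_prod_linearForm L).mul (isHomogeneous_linearForm w),
    fun b j => ?_⟩
  split_ifs with hb
  · exact hb ▸ hw j
  · exact aeval_pderiv_mul_eq_zero_of_singular (hAb b hb).1 ((hAb b hb).2 j) _

end DoubleCover

section Dimension

variable {K : Type*} [Field K]

instance (σ : Type*) [Finite σ] (d : ℕ) : Module.Finite K (homogeneousSubmodule σ K d) :=
  Module.Finite.iff_fg.2 (homogeneousSubmodule_fg (σ := σ) (R := K) d)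

lemma finrank_homogeneousSubmodule (σ : Type*) [Fintype σ] [DecidableEq σ] (d : ℕ) :
    finrank K (homogeneousSubmodule σ K d) = (Fintype.card σ + d - 1).choose d := by
  have hdeg : {s : σ →₀ ℕ | s.degree = d} = (univ.finsuppAntidiag d : Finset (σ →₀ ℕ)) := by
    ext s
    simp [Finsupp.degree_eq_sum]
  rw [homogeneousSubmodule_eq_finsupp_supported, hdeg,
    (AddMonoidAlgebra.supportedEquivFinsupp _).finrank_eq, finrank_finsupp_self]
  simp [card_finsuppAntidiag_nat_eq_choose]

end Dimension

lemma finrank_dblVanish_add {K ι : Type} [Field K] [Fintype ι] [DecidableEq ι] {N d : ℕ}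
    (p : ι → Fin N → K)
    (h : ∀ a (v : Fin N → K), ∃ f : MvPolynomial (Fin N) K, f.IsHomogeneous d ∧
      ∀ b j, aeval (p b) (pderiv j f) = if b = a then v j else 0) :
    finrank K (dblVanish K N d p) + Fintype.card ι * N = (N + d - 1).choose d := by
  set V := homogeneousSubmodule (Fin N) K d
  set Ψ : MvPolynomial (Fin N) K →ₗ[K] (ι × Fin N → K) :=
    LinearMap.pi fun bj => (aeval (p bj.1)).toLinearMap ∘ₗ (pderiv bj.2).toLinearMap
  have hker : dblVanish K N d p = (LinearMap.ker (Ψ ∘ₗ V.subtype)).map V.subtype := by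
    rw [LinearMap.ker_comp, map_comap_subtype, dblVanish, LinearMap.ker_pi, iInf_prod]
  have hsurj : LinearMap.range (Ψ ∘ₗ V.subtype) = ⊤ := by
    refine LinearMap.range_eq_top.2 fun y => ?_
    choose f hf hfp using fun a => h a fun j => y (a, j)
    refine ⟨⟨∑ a, f a, sum_mem fun a _ => (mem_homogeneousSubmodule _ _).2 (hf a)⟩, ?_⟩
    funext bj
    simp only [Ψ, LinearMap.comp_apply, LinearMap.pi_apply, Submodule.coe_subtype, map_sum,
      AlgHom.toLinearMap_apply, Derivation.coeFn_coe, hfp, sum_ite_eq, mem_univ, if_true]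
  have hrank := LinearMap.finrank_range_add_finrank_ker (Ψ ∘ₗ V.subtype)
  rw [hsurj, finrank_top, Module.finrank_fintype_fun_eq_card, Fintype.card_prod, Fintype.card_fin,
    finrank_homogeneousSubmodule, Fintype.card_fin] at hrank
  rw [hker, finrank_map_subtype_eq]
  omega

section Combinatorics

variable {α β : Type*} [DecidableEq α] [DecidableEq β]

lemma Finset.exists_subset_two_mul_card_filter_le (X : Finset α) (w : α → β) {k : ℕ}
    (hk : ∀ b ∈ X, #{c ∈ X | w c = w b} ≤ k) :
    ∃ E ⊆ X, #E ≤ 2 * k - #X ∧ ∀ b ∈ X \ E, 2 * #{c ∈ X \ E | w c = w b} ≤ #(X \ E) := by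
  rcases X.eq_empty_or_nonempty with rfl | hne
  · exact ⟨∅, by simp⟩
  obtain ⟨b₀, hb₀, hmax⟩ := X.exists_max_image (fun b => #{c ∈ X | w c = w b}) hne
  set C := {c ∈ X | w c = w b₀}
  have hCX : #C ≤ #X := card_le_card (filter_subset _ _)
  obtain ⟨E, hEC, hE⟩ := exists_subset_card_eq (show 2 * #C - #X ≤ #C by omega)
  have hEX : E ⊆ X := hEC.trans (filter_subset _ _)
  have hXE : #(X \ E) = #X - #E := card_sdiff_of_subset hEX
  have hCk : #C ≤ k := hk b₀ hb₀
  refine ⟨E, hEX, by omega, fun b hb => ?_⟩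
  have hbX := (mem_sdiff.1 hb).1
  by_cases hbb : w b = w b₀
  · have hfiber : {c ∈ X \ E | w c = w b} = C \ E := by
      ext c
      simp only [C, mem_filter, mem_sdiff, hbb]
      tauto
    rw [hfiber, card_sdiff_of_subset hEC]
    omega
  · have h₁ : #{c ∈ X \ E | w c = w b} ≤ #{c ∈ X | w c = w b} :=
      card_le_card (filter_subset_filter _ sdiff_subset)
    have h₂ : #{c ∈ X | w c = w b} + #C ≤ #X := by
      rw [← card_union_of_disjoint (disjoint_filter.2 fun c _ h => h ▸ hbb)]
      exact card_le_card (union_subset (filter_subset _ _) (filter_subset _ _))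
    have h₃ := hmax b hbX
    omega

lemma Finset.exists_apply_ne_of_two_mul_card_filter_le (Y : Finset α) (w : α → β)
    (hY : ∀ b ∈ Y, 2 * #{c ∈ Y | w c = w b} ≤ #Y) :
    ∃ τ : α → α, (∀ b ∈ Y, τ b ∈ Y ∧ w (τ b) ≠ w b) ∧ ∀ b ∈ Y, ∃ c ∈ Y, τ c = b := by
  set t : Y → Finset α := fun b => {c ∈ Y | w c ≠ w b}
  have hall : ∀ A : Finset Y, #A ≤ #(A.biUnion t) := by
    intro A
    rcases A.eq_empty_or_nonempty with rfl | ⟨b₀, hb₀⟩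
    · simp
    by_cases hmono : ∀ b ∈ A, w b = w b₀
    · have h₁ : #A ≤ #{c ∈ Y | w c = w b₀} := by
        rw [← card_map (Function.Embedding.subtype _)]
        refine card_le_card fun c hc => ?_
        obtain ⟨b, hb, rfl⟩ := mem_map.1 hc
        exact mem_filter.2 ⟨b.2, hmono b hb⟩
      have h₂ : #(t b₀) ≤ #(A.biUnion t) := card_le_card (subset_biUnion_of_mem t hb₀)
      have h₃ : #{c ∈ Y | w c = w b₀} + #(t b₀) = #Y := card_filter_add_card_filter_not _
      have h₄ := hY b₀ b₀.2
      omega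
    · push Not at hmono
      obtain ⟨b₁, hb₁, hne⟩ := hmono
      have hcover : Y ⊆ A.biUnion t := fun c hc => by
        rw [mem_biUnion]
        by_cases hc₀ : w c = w b₀
        · exact ⟨b₁, hb₁, mem_filter.2 ⟨hc, hc₀ ▸ hne.symm⟩⟩
        · exact ⟨b₀, hb₀, mem_filter.2 ⟨hc, hc₀⟩⟩
      calc #A ≤ Fintype.card Y := card_le_univ A
        _ = #Y := Fintype.card_coe Y
        _ ≤ #(A.biUnion t) := card_le_card hcover
  obtain ⟨f, hfinj, hft⟩ := (all_card_le_biUnion_card_iff_exists_injective t).1 hall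
  have hfY : ∀ b (hb : b ∈ Y), f ⟨b, hb⟩ ∈ Y ∧ w (f ⟨b, hb⟩) ≠ w b :=
    fun b hb => mem_filter.1 (hft ⟨b, hb⟩)
  refine ⟨fun b => if hb : b ∈ Y then f ⟨b, hb⟩ else b, fun b hb => by simpa [hb] using hfY b hb,
    fun b hb => ?_⟩
  obtain ⟨c, hc, rfl⟩ := surj_on_of_inj_on_of_card_le (fun c hc => f ⟨c, hc⟩)
    (fun c hc => (hfY c hc).1) (fun c₁ c₂ _ _ h => congrArg Subtype.val (hfinj h)) le_rfl b hb
  exact ⟨c, hc, by simp [hc]⟩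

end Combinatorics

section Geometry

variable {K V : Type*} [Field K] [AddCommGroup V] [Module K V]

lemma finrank_span_pair_eq_two {x y : V} (hx : x ≠ 0) (hxy : ∀ c : K, y ≠ c • x) :
    finrank K (span K {x, y}) = 2 := by
  classical
  have hne : x ≠ y := fun h => hxy 1 (by rw [one_smul, h])
  rw [finrank_span_set_eq_card (linearIndepOn_id_pair hx fun c h => hxy c h.symm)]
  simp [Set.toFinset_insert, card_insert_of_notMem, hne]

lemma finrank_span_pair_le_two (x y : V) : finrank K (span K {x, y}) ≤ 2 := by
  classical
  refine (finrank_span_le_card _).trans ?_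
  simpa using card_insert_le x {y}

variable [FiniteDimensional K V]

lemma span_pair_eq_of_mem_span_pair {x y z : V} (hy : finrank K (span K {x, y}) = 2)
    (hz : finrank K (span K {x, z}) = 2) (hx : x ∈ span K {y, z}) :
    span K {x, y} = span K {x, z} := by
  have hsub : ∀ {w}, w ∈ span K {y, z} → finrank K (span K {x, w}) = 2 →
      span K {x, w} = span K {y, z} := fun hw hw2 =>
    eq_of_le_of_finrank_le (span_le.2 (Set.insert_subset hx (Set.singleton_subset_iff.2 hw)))
      (hw2 ▸ finrank_span_pair_le_two y z)
  rw [hsub (subset_span (Set.mem_insert y _)) hy,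
    hsub (subset_span (Set.mem_insert_of_mem y rfl)) hz]

lemma card_lt_of_forall_mem_of_finrank_le_two {ι : Type*} {p : ι → V} {N : ℕ}
    (hncol : ∀ T : Finset ι, #T = N → 3 ≤ finrank K (span K (p '' T))) {W : Submodule K V}
    (hW : finrank K W ≤ 2) {T : Finset ι} (hT : ∀ b ∈ T, p b ∈ W) : #T < N := by
  by_contra! h
  obtain ⟨T', hT', hcard⟩ := exists_subset_card_eq h
  have hle : span K (p '' T') ≤ W := span_le.2 fun _ ⟨b, hb, hpb⟩ => hpb ▸ hT b (hT' hb)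
  have := finrank_mono hle
  have := hncol T' hcard
  omega

end Geometry

lemma exists_dotProduct_ne_zero_of_notMem {K σ : Type*} [Field K] [Fintype σ]
    {U : Submodule K (σ → K)} {x : σ → K} (hx : x ∉ U) :
    ∃ ℓ : σ → K, (∀ u ∈ U, ℓ ⬝ᵥ u = 0) ∧ ℓ ⬝ᵥ x ≠ 0 := by
  classical
  obtain ⟨f, hfx, hfU⟩ := U.exists_dual_map_eq_bot_of_notMem hx inferInstance
  have hf : ∀ y, (dotProductEquiv K σ).symm f ⬝ᵥ y = f y := fun y => by
    rw [← dotProductEquiv_apply_apply, LinearEquiv.apply_symm_apply]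
  refine ⟨(dotProductEquiv K σ).symm f, fun u hu => ?_, by rwa [hf]⟩
  rw [hf, ← mem_bot K, ← hfU]
  exact mem_map_of_mem hu

section Construction

open scoped Classical

variable {K σ ι : Type*} [Field K] [Fintype σ] {p : ι → σ → K} {a : ι}

lemma DoubleCovers.exists_card_eq {L : Multiset (σ → K)} (h : DoubleCovers p a L)
    (hpa : p a ≠ 0) {k : ℕ} (hk : Multiset.card L ≤ k) :
    ∃ L', DoubleCovers p a L' ∧ Multiset.card L' = k := by
  obtain ⟨u, -, hu⟩ := exists_dotProduct_ne_zero_of_notMem (U := ⊥) (mem_bot K |>.not.2 hpa)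
  exact ⟨_, h.add_replicate hu (k - Multiset.card L), by simp; omega⟩

lemma card_filter_map_val (s : Finset ι) (f : ι → σ → K) (x : σ → K) :
    Multiset.card ((s.val.map f).filter fun ℓ => ℓ ⬝ᵥ x = 0) = #{b ∈ s | f b ⬝ᵥ x = 0} := by
  rw [Multiset.filter_map, Multiset.card_map]
  rfl

/-- Each `b ∈ Y` lies on the hyperplanes through `p b, p (τ b)` and through `p c, p b` where
`τ c = b`; each `b ∈ E` lies on a hyperplane through `p b` taken twice. -/
lemma exists_doubleCovers_of_pairing {Y E : Finset ι} {τ : ι → ι}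
    (hYE : ∀ b ≠ a, b ∈ Y ∨ b ∈ E) (hτ : ∀ b ∈ Y, τ b ≠ b ∧ p a ∉ span K {p b, p (τ b)})
    (hτY : ∀ b ∈ Y, ∃ c ∈ Y, τ c = b) (hE : ∀ b ∈ E, p a ∉ span K {p b}) :
    ∃ L, DoubleCovers p a L ∧ Multiset.card L = #Y + 2 * #E := by
  have hℓ : ∀ b c, ∃ ℓ : σ → K, p a ∉ span K {p b, p c} →
      ℓ ⬝ᵥ p b = 0 ∧ ℓ ⬝ᵥ p c = 0 ∧ ℓ ⬝ᵥ p a ≠ 0 := fun b c => by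
    by_cases h : p a ∉ span K {p b, p c}
    · obtain ⟨ℓ, hℓ0, hℓa⟩ := exists_dotProduct_ne_zero_of_notMem h
      exact ⟨ℓ, fun _ => ⟨hℓ0 _ (subset_span (Set.mem_insert _ _)),
        hℓ0 _ (subset_span (Set.mem_insert_of_mem _ rfl)), hℓa⟩⟩
    · exact ⟨0, fun h' => absurd h' h⟩
  choose ℓ hℓ using hℓ
  have hEℓ : ∀ b ∈ E, ℓ b b ⬝ᵥ p b = 0 ∧ ℓ b b ⬝ᵥ p a ≠ 0 := fun b hb =>
    have := hℓ b b (by rw [Set.pair_eq_singleton]; exact hE b hb)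
    ⟨this.1, this.2.2⟩
  set LY := Y.val.map fun b => ℓ b (τ b)
  set LE := E.val.map fun b => ℓ b b
  refine ⟨LY + (LE + LE), ⟨fun m hm => ?_, fun b hb => ?_⟩, by simp [LY, LE]; ring⟩
  · simp only [Multiset.mem_add, or_self, LY, LE, Multiset.mem_map] at hm
    rcases hm with ⟨b, hb, rfl⟩ | ⟨b, hb, rfl⟩
    · exact (hℓ b (τ b) (hτ b hb).2).2.2
    · exact (hEℓ b hb).2
  rw [Multiset.filter_add, Multiset.filter_add, Multiset.card_add, Multiset.card_add,
    card_filter_map_val, card_filter_map_val]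
  rcases hYE b hb with hbY | hbE
  · obtain ⟨c, hcY, rfl⟩ := hτY b hbY
    have hpair : {c, τ c} ⊆ {e ∈ Y | ℓ e (τ e) ⬝ᵥ p (τ c) = 0} := by
      intro e he
      rcases mem_insert.1 he with rfl | he
      · exact mem_filter.2 ⟨hcY, (hℓ _ _ (hτ e hcY).2).2.1⟩
      · rw [mem_singleton.1 he]
        exact mem_filter.2 ⟨hbY, (hℓ _ _ (hτ _ hbY).2).1⟩
    have := card_le_card hpair
    rw [card_pair (hτ c hcY).1.symm] at this
    omega
  · have : 0 < #{e ∈ E | ℓ e e ⬝ᵥ p b = 0} :=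
      card_pos.2 ⟨b, mem_filter.2 ⟨hbE, (hEℓ b hbE).1⟩⟩
    omega

lemma exists_doubleCovers [Fintype ι] {N : ℕ} (hp0 : ∀ i, p i ≠ 0)
    (hpd : ∀ i j, i ≠ j → ∀ c : K, p i ≠ c • p j) (hcard : Fintype.card ι = N + 1)
    (hncol : ∀ T : Finset ι, #T = N → 3 ≤ finrank K (span K (p '' T))) (a : ι) :
    ∃ L, DoubleCovers p a L ∧ Multiset.card L ≤ N + (N - 4) := by
  set X := univ.erase a
  have hXcard : #X = N := by simp [X, card_erase_of_mem, hcard]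
  set line : ι → Submodule K (σ → K) := fun b => span K {p a, p b}
  have hline : ∀ b ∈ X, finrank K (line b) = 2 := fun b hb =>
    finrank_span_pair_eq_two (hp0 a) (hpd b a (ne_of_mem_erase hb))
  have hfiber : ∀ b ∈ X, #{c ∈ X | line c = line b} ≤ N - 2 := by
    intro b hb
    have hlt := card_lt_of_forall_mem_of_finrank_le_two hncol (hline b hb).le
      (T := insert a {c ∈ X | line c = line b}) fun c hc => by
        rcases mem_insert.1 hc with rfl | hc
        · exact subset_span (Set.mem_insert _ _)
        · rw [← (mem_filter.1 hc).2]
          exact subset_span (Set.mem_insert_of_mem _ rfl)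
    rw [card_insert_of_notMem (by simp [X])] at hlt
    omega
  obtain ⟨E, hEX, hE, hbal⟩ := X.exists_subset_two_mul_card_filter_le line hfiber
  obtain ⟨τ, hτ, hτY⟩ := (X \ E).exists_apply_ne_of_two_mul_card_filter_le line hbal
  have hτline : ∀ b ∈ X \ E, p a ∉ span K {p b, p (τ b)} := fun b hb hmem =>
    (hτ b hb).2 (span_pair_eq_of_mem_span_pair (hline b (mem_sdiff.1 hb).1)
      (hline _ (mem_sdiff.1 (hτ b hb).1).1) hmem).symm
  have hEline : ∀ b ∈ E, p a ∉ span K {p b} := fun b hb hmem => by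
    obtain ⟨c, hc⟩ := mem_span_singleton.1 hmem
    exact hpd a b (ne_of_mem_erase (hEX hb)).symm c hc.symm
  obtain ⟨L, hL, hLcard⟩ := exists_doubleCovers_of_pairing
    (fun b hb => (em (b ∈ E)).symm.imp (fun h => mem_sdiff.2 ⟨mem_erase.2 ⟨hb, mem_univ b⟩, h⟩)
      id)
    (fun b hb => ⟨fun h => (hτ b hb).2 (congrArg line h), hτline b hb⟩) hτY hEline
  refine ⟨L, hL, ?_⟩
  rw [hLcard, card_sdiff_of_subset hEX]
  omega

end Construction

theorem second_veronese_terracini_noncollinear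
    {K : Type} [Field K] [CharZero K]
    (n d : ℕ) (hd : 4 ≤ d)
    (S : Fin ((d + 3) / 2 + 1) → (Fin (n + 1) → K))
    (hS0 : ∀ i, S i ≠ 0)
    (hSd : ∀ i j, i ≠ j → ∀ c : K, S i ≠ c • S j)
    (hncol : ∀ T : Finset (Fin ((d + 3) / 2 + 1)), T.card = (d + 3) / 2 →
      3 ≤ Module.finrank K ↥(Submodule.span K (S '' ↑T))) :
    Module.finrank K ↥(dblVanish K (n + 1) d S) + ((d + 3) / 2 + 1) * (n + 1)
      = Nat.choose (n + d) n := by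
  have hforms : ∀ a (v : Fin (n + 1) → K), ∃ f : MvPolynomial (Fin (n + 1)) K,
      f.IsHomogeneous d ∧ ∀ b j, aeval (S b) (pderiv j f) = if b = a then v j else 0 := by
    intro a v
    obtain ⟨L, hL, hLcard⟩ := exists_doubleCovers hS0 hSd (Fintype.card_fin _) hncol a
    obtain ⟨L', hL', hL'card⟩ := hL.exists_card_eq (hS0 a) (k := d - 1) (by omega)
    obtain ⟨f, hf, hfS⟩ := hL'.exists_isHomogeneous_pderiv_eq v
    exact ⟨f, by rwa [hL'card, Nat.sub_add_cancel (by omega)] at hf, hfS⟩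
  have hrank := finrank_dblVanish_add S hforms
  rw [Fintype.card_fin, show n + 1 + d - 1 = n + d by omega] at hrank
  rwa [Nat.choose_symm_add]
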